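/- Let M be a magma and let S be a closure system of congruences on M such that for all θ, φ ∈ S the S-join of θ and φ equals, as a binary relation, the composition θ ∘ φ. Then for every finite nonempty subset Y of S, the S-join of Y (the least element of S containing every member of Y) is contained in the supremum of Y taken in the full congruence lattice of M. -/

import Mathlib

/-!
Adding one congruence `θ` at a time: the `S`-join of `insert θ Y` is the binary `S`-join of `θ`
and the `S`-join `J` of `Y`, which by hypothesis is the composite `θ ∘ J`. A composite of two
relations below a congruence `σ` lies below `σ` by transitivity, so induction on `Y` applies.
-/

section CompleteLattice

variable {α : Type*} [CompleteLattice α] {S Y : Set α} {θ : α}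

def sJoin (S Y : Set α) : α :=
  sInf {ψ | ψ ∈ S ∧ ∀ θ ∈ Y, θ ≤ ψ}

theorem sJoin_mem (hS : ∀ T ⊆ S, sInf T ∈ S) : sJoin S Y ∈ S :=
  hS _ fun _ hψ => hψ.1

theorem le_sJoin (hθ : θ ∈ Y) : θ ≤ sJoin S Y :=
  le_sInf fun _ hψ => hψ.2 θ hθ

theorem sJoin_singleton (hθ : θ ∈ S) : sJoin S {θ} = θ :=
  le_antisymm (sInf_le ⟨hθ, fun _ h => (Set.mem_singleton_iff.mp h).le⟩)
    (le_sJoin (Set.mem_singleton θ))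

theorem sJoin_insert (S Y : Set α) (θ : α) :
    sJoin S (insert θ Y) = sInf {ψ | ψ ∈ S ∧ θ ≤ ψ ∧ sJoin S Y ≤ ψ} := by
  unfold sJoin
  congr 1
  ext ψ
  simp only [Set.mem_ofPred_eq, Set.forall_mem_insert]
  refine and_congr_right fun hψ => and_congr_right fun _ => ⟨fun hY => sInf_le ⟨hψ, hY⟩, ?_⟩
  exact fun hJ φ hφ => (le_sJoin hφ).trans hJ

end CompleteLattice

theorem Con.le_of_rel_imp_comp {M : Type*} [Mul M] {ρ θ φ σ : Con M}
    (hρ : ∀ a b, ρ a b → ∃ c, θ a c ∧ φ c b) (hθ : θ ≤ σ) (hφ : φ ≤ σ) : ρ ≤ σ := by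
  intro a b hab
  obtain ⟨c, hac, hcb⟩ := hρ a b hab
  exact σ.trans (hθ hac) (hφ hcb)

/-- The finite-join step in the proof of the paper's main theorem: if in a
closure system `S` of congruences all binary `S`-joins are given by relation
composition, then the `S`-join of every finite nonempty subset `Y` of `S` is
contained in the supremum of `Y` in the full congruence lattice. -/
theorem sJoin_finset_le_sSup {M : Type*} [Mul M] (S : Set (Con M))
    (hS : ∀ T ⊆ S, sInf T ∈ S)
    (hcomp : ∀ θ ∈ S, ∀ φ ∈ S, ∀ a b : M,
      (sInf {ψ | ψ ∈ S ∧ θ ≤ ψ ∧ φ ≤ ψ}) a b ↔ ∃ c, θ a c ∧ φ c b) :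
    ∀ Y ⊆ S, Y.Finite → Y.Nonempty →
      sInf {ψ | ψ ∈ S ∧ ∀ θ ∈ Y, θ ≤ ψ} ≤ sSup Y := by
  intro Y hYS hYfin hYne
  lift Y to Finset (Con M) using hYfin
  change sJoin S Y ≤ sSup Y
  induction hYne using Finset.Nonempty.cons_induction with
  | singleton θ =>
    simp only [Finset.coe_singleton, Set.singleton_subset_iff] at hYS ⊢
    rw [sJoin_singleton hYS, sSup_singleton]
  | cons θ Y _ _ ih =>
    rw [Finset.coe_cons] at hYS ⊢
    rw [Set.insert_subset_iff] at hYS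
    rw [sJoin_insert]
    exact Con.le_of_rel_imp_comp (fun a b => (hcomp θ hYS.1 _ (sJoin_mem hS) a b).mp)
      (le_sSup (Set.mem_insert θ _))
      ((ih hYS.2).trans (sSup_le_sSup (Set.subset_insert θ _)))
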